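/- For every R > 0 there exists M₀ > 0 such that for every M ≥ M₀ there exists N ∈ ℕ with: for all n ≥ N, the Lebesgue measure of A(n,M,R) := { a = (a₁,…,a_n) ∈ (ℝ²)ⁿ : Σ_{j=1}^n |a_j|² ≤ nR² and −Σ_{i≠j} ln|a_i − a_j| ≤ n(n−1)M } satisfies |A(n,M,R)| ≥ ½ |B^{2n}_{R√n}|, where B^{2n}_{R√n} is the Euclidean ball of radius R√n centered at 0 in ℝ^{2n}. -/

import Mathlib

open MeasureTheory Filter

noncomputable section

/-- The configuration space `(ℝ²)ⁿ ≅ ℝ^{2n}`, as a Euclidean space. -/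
abbrev Conf (n : ℕ) := EuclideanSpace ℝ (Fin n × Fin 2)

/-- The Euclidean distance `|a_i - a_j|` between the `i`-th and `j`-th planar points of a
configuration `a ∈ (ℝ²)ⁿ`. -/
def pd {n : ℕ} (a : Conf n) (i j : Fin n) : ℝ :=
  Real.sqrt (∑ k : Fin 2, (a (i,k) - a (j,k))^2)

/-- The set `A(n,M,R)` of configurations with second moment at most `nR²` and
logarithmic interaction energy at most `n(n-1)M`. -/
def Aset (n : ℕ) (M R : ℝ) : Set (Conf n) :=
  {a | (∑ i : Fin n, ∑ k : Fin 2, (a (i,k))^2) ≤ (n:ℝ) * R^2 ∧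
    -(∑ i : Fin n, ∑ j : Fin n, if i ≠ j then Real.log (pd a i j) else 0) ≤
      (n:ℝ) * ((n:ℝ)-1) * M}

/-!
Points of the ball `B = B^{2n}_r`, `r = R√n`, satisfy the moment condition, so a point of
`B \ A(n,M,R)` has logarithmic energy above `n(n-1)M`, hence so has the majorant
`∑_{i≠j} (-log|a_i - a_j|)⁺`. Integrating first over the two coordinates of `a_i`, and using that
`(-log|z|)⁺` has integral at most `4` over the plane, each pair contributes at most
`4 vol(B^{2n-2}_r)`, while `vol(B^{2n}_r) = (πr²/n) vol(B^{2n-2}_r) = πR² vol(B^{2n-2}_r)`.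
Markov's inequality then bounds `vol(B \ A)` by `4 vol(B) / (πR²M)`, which is at most
`vol(B)/2` once `M ≥ 8/(πR²)`.
-/

open Real Set Metric Module
open scoped ENNReal

def Equiv.subtypeFstEq {α β : Type*} (a : α) : β ≃ {q : α × β // q.1 = a} where
  toFun b := ⟨(a, b), rfl⟩
  invFun q := q.1.2
  left_inv _ := rfl
  right_inv := by rintro ⟨⟨_, _⟩, rfl⟩; rfl

theorem MeasureTheory.MeasurePreserving.setLIntegral_le_mul_measure
    {X Y Z : Type*} [MeasurableSpace X] [MeasurableSpace Y] [MeasurableSpace Z]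
    {μ : Measure X} {ν : Measure Y} {ρ : Measure Z} [SFinite μ] [SFinite ν]
    {T : X × Y → Z} (hT : MeasurePreserving T (μ.prod ν) ρ) {g : Z → ℝ≥0∞} (hg : Measurable g)
    {s : Set Z} (hs : MeasurableSet s) {S : Set Y} (hsS : ∀ x y, T (x, y) ∈ s → y ∈ S)
    {C : ℝ≥0∞} (hC : ∀ y ∈ S, ∫⁻ x, g (T (x, y)) ∂μ ≤ C) :
    ∫⁻ z in s, g z ∂ρ ≤ C * ν S := by
  have hfiber : ∀ y, ∫⁻ x, s.indicator g (T (x, y)) ∂μ ≤ S.indicator (fun _ => C) y := by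
    intro y
    by_cases hy : y ∈ S
    · rw [indicator_of_mem hy]
      exact (lintegral_mono fun x => indicator_le_self s g _).trans (hC y hy)
    · have : ∀ x, s.indicator g (T (x, y)) = 0 :=
        fun x => indicator_of_notMem (fun h => hy (hsS x y h)) g
      simp [this]
  calc ∫⁻ z in s, g z ∂ρ = ∫⁻ w, s.indicator g (T w) ∂(μ.prod ν) := by
        rw [← lintegral_indicator hs, hT.lintegral_comp (hg.indicator hs)]
    _ = ∫⁻ y, ∫⁻ x, s.indicator g (T (x, y)) ∂μ ∂ν :=
        lintegral_prod_symm _ ((hg.indicator hs).comp hT.measurable).aemeasurable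
    _ ≤ ∫⁻ y, S.indicator (fun _ => C) y ∂ν := lintegral_mono hfiber
    _ ≤ C * ν S := lintegral_indicator_const_le S C

theorem volume_ball_eq_ofReal_mul_volume_ball
    {E F : Type*} [NormedAddCommGroup E] [InnerProductSpace ℝ E] [FiniteDimensional ℝ E]
    [MeasurableSpace E] [BorelSpace E] [NormedAddCommGroup F] [InnerProductSpace ℝ F]
    [FiniteDimensional ℝ F] [MeasurableSpace F] [BorelSpace F] [Nontrivial F] {k : ℕ}
    (hE : finrank ℝ E = 2 * (k + 1)) (hF : finrank ℝ F = 2 * k) (x : E) (y : F)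
    {r : ℝ} (hr : 0 ≤ r) :
    volume (ball x r) = ENNReal.ofReal (π * r ^ 2 / (k + 1)) * volume (ball y r) := by
  have : Nontrivial E := Module.nontrivial_of_finrank_pos (R := ℝ) (by omega)
  rw [InnerProductSpace.volume_ball_of_dim_even hE, InnerProductSpace.volume_ball_of_dim_even hF,
    hE, hF, ← ENNReal.ofReal_pow hr, ← ENNReal.ofReal_pow hr, ← ENNReal.ofReal_mul (by positivity),
    ← ENNReal.ofReal_mul (by positivity), ← ENNReal.ofReal_mul (by positivity)]
  congr 1
  rw [Nat.factorial_succ]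
  push_cast
  field_simp
  ring

lemma support_ofReal_neg_log_subset :
    (fun x : ℝ => ENNReal.ofReal (-log x)).support ⊆ Ioc (-1) 1 := by
  intro x hx
  rw [Function.mem_support, ne_eq, ENNReal.ofReal_eq_zero, not_le, neg_pos] at hx
  have hx0 : x ≠ 0 := by rintro rfl; simp at hx
  rw [← log_abs, log_neg_iff (abs_pos.2 hx0), abs_lt] at hx
  exact ⟨hx.1, hx.2.le⟩

lemma lintegral_ofReal_neg_log : ∫⁻ x : ℝ, ENNReal.ofReal (-log x) = 2 := by
  rw [← setLIntegral_eq_of_support_subset support_ofReal_neg_log_subset,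
    ← ofReal_integral_eq_lintegral_ofReal]
  · rw [integral_neg, ← intervalIntegral.integral_of_le (by norm_num), integral_log]
    norm_num
  · exact intervalIntegral.intervalIntegrable_log'.1.neg
  · refine (ae_restrict_iff' measurableSet_Ioc).2 (ae_of_all _ fun x hx => ?_)
    rw [Pi.zero_apply, neg_nonneg, ← log_abs]
    exact log_nonpos (abs_nonneg x) (abs_le.2 ⟨hx.1.le, hx.2⟩)

lemma lintegral_ofReal_neg_log_sub (c : ℝ) : ∫⁻ x : ℝ, ENNReal.ofReal (-log (x - c)) = 2 := by
  rw [lintegral_sub_right_eq_self (fun x => ENNReal.ofReal (-log x)) c, lintegral_ofReal_neg_log]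

lemma lintegral_ofReal_neg_log_sqrt_le (c₀ c₁ : ℝ) :
    ∫⁻ p : ℝ × ℝ, ENNReal.ofReal (-log √((p.1 - c₀) ^ 2 + (p.2 - c₁) ^ 2)) ≤ 4 := by
  have hfiber : ∀ u ≠ c₀, ∫⁻ v, ENNReal.ofReal (-log √((u - c₀) ^ 2 + (v - c₁) ^ 2)) ≤
      2 * ENNReal.ofReal (-log (u - c₀)) := by
    intro u hu
    calc ∫⁻ v, ENNReal.ofReal (-log √((u - c₀) ^ 2 + (v - c₁) ^ 2))
        ≤ ∫⁻ v, (closedBall c₁ 1).indicator (fun _ => ENNReal.ofReal (-log (u - c₀))) v := by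
          refine lintegral_mono fun v => ?_
          by_cases hv : v ∈ closedBall c₁ 1
          · rw [indicator_of_mem hv, ← log_abs (u - c₀)]
            refine ENNReal.ofReal_le_ofReal (neg_le_neg (log_le_log ?_ ?_))
            · exact abs_pos.2 (sub_ne_zero.2 hu)
            · exact le_sqrt_of_sq_le (by rw [sq_abs]; nlinarith [sq_nonneg (v - c₁)])
          · rw [indicator_of_notMem hv, nonpos_iff_eq_zero, ENNReal.ofReal_eq_zero, neg_nonpos]
            rw [mem_closedBall, Real.dist_eq, not_le] at hv
            refine log_nonneg (le_sqrt_of_sq_le ?_)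
            nlinarith [sq_nonneg (u - c₀), sq_abs (v - c₁)]
      _ = 2 * ENNReal.ofReal (-log (u - c₀)) := by
          rw [lintegral_indicator_const measurableSet_closedBall, Real.volume_closedBall,
            mul_comm]
          norm_num
  calc ∫⁻ p : ℝ × ℝ, ENNReal.ofReal (-log √((p.1 - c₀) ^ 2 + (p.2 - c₁) ^ 2))
      = ∫⁻ u, ∫⁻ v, ENNReal.ofReal (-log √((u - c₀) ^ 2 + (v - c₁) ^ 2)) := by
        rw [Measure.volume_eq_prod, lintegral_prod _ (by fun_prop)]
    _ ≤ ∫⁻ u, 2 * ENNReal.ofReal (-log (u - c₀)) :=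
        lintegral_mono_ae ((volume.ae_ne c₀).mono hfiber)
    _ = 4 := by
        rw [lintegral_const_mul _ (by fun_prop), lintegral_ofReal_neg_log_sub]
        norm_num

lemma lintegral_ofReal_neg_log_sqrt_sum_le (c : Fin 2 → ℝ) :
    ∫⁻ w : Fin 2 → ℝ, ENNReal.ofReal (-log √(∑ k, (w k - c k) ^ 2)) ≤ 4 := by
  rw [← ((volume_preserving_finTwoArrow ℝ).symm _).lintegral_comp (by fun_prop)]
  simpa [Fin.sum_univ_two] using lintegral_ofReal_neg_log_sqrt_le (c 0) (c 1)

def insertPoint {n : ℕ} (i : Fin n) (w : Fin 2 → ℝ)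
    (y : {q : Fin n × Fin 2 // ¬ q.1 = i} → ℝ) : Conf n :=
  WithLp.toLp 2 fun q => if h : q.1 = i then w q.2 else y ⟨q, h⟩

section insertPoint

variable {n : ℕ} (i : Fin n)

@[simp]
lemma insertPoint_apply_self (w : Fin 2 → ℝ) (y : {q : Fin n × Fin 2 // ¬ q.1 = i} → ℝ)
    (k : Fin 2) : insertPoint i w y (i, k) = w k := by
  simp [insertPoint]

lemma insertPoint_apply_of_ne {j : Fin n} (hji : ¬ j = i) (w : Fin 2 → ℝ)
    (y : {q : Fin n × Fin 2 // ¬ q.1 = i} → ℝ) (k : Fin 2) :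
    insertPoint i w y (j, k) = y ⟨(j, k), hji⟩ := by
  simp [insertPoint, hji]

lemma measurePreserving_insertPoint :
    MeasurePreserving (fun p : (Fin 2 → ℝ) × ({q : Fin n × Fin 2 // ¬ q.1 = i} → ℝ) =>
      insertPoint i p.1 p.2) (volume.prod volume) volume := by
  have hsplit := ((volume_preserving_piEquivPiSubtypeProd (fun _ : Fin n × Fin 2 => ℝ)
    (fun q => q.1 = i)).symm _).comp ((volume_measurePreserving_piCongrLeft (fun _ => ℝ)
    (Equiv.subtypeFstEq (β := Fin 2) i)).prod (MeasurePreserving.id volume))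
  convert (PiLp.volume_preserving_toLp (Fin n × Fin 2)).comp hsplit using 1
  · rfl
  ext ⟨w, y⟩ ⟨j, k⟩
  by_cases hji : j = i
  · subst hji
    simp only [Function.comp_apply, Prod.map_apply, id_eq, insertPoint_apply_self,
      MeasurableEquiv.piEquivPiSubtypeProd_symm_apply, dite_true]
    exact (Equiv.piCongrLeft_apply_apply (P := fun _ => ℝ) (Equiv.subtypeFstEq j) w k).symm
  · simp [insertPoint_apply_of_ne i hji, hji]

lemma norm_le_norm_insertPoint (w : Fin 2 → ℝ) (y : {q : Fin n × Fin 2 // ¬ q.1 = i} → ℝ) :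
    ‖WithLp.toLp 2 y‖ ≤ ‖insertPoint i w y‖ := by
  rw [← sq_le_sq₀ (norm_nonneg _) (norm_nonneg _), EuclideanSpace.norm_sq_eq,
    EuclideanSpace.norm_sq_eq,
    ← Fintype.sum_subtype_add_sum_subtype (fun q : Fin n × Fin 2 => q.1 = i)]
  refine le_add_of_nonneg_of_le (Finset.sum_nonneg fun _ _ => sq_nonneg _) (le_of_eq ?_)
  refine Finset.sum_congr rfl fun q _ => ?_
  simp [insertPoint, q.2]

end insertPoint

lemma card_subtype_fst_ne {n : ℕ} (i : Fin n) :
    Fintype.card {q : Fin n × Fin 2 // ¬ q.1 = i} = 2 * (n - 1) := by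
  rw [Fintype.card_subtype_compl, ← Fintype.card_congr (Equiv.subtypeFstEq i)]
  simp only [Fintype.card_prod, Fintype.card_fin]
  omega

lemma measurable_ofReal_neg_log_pd {n : ℕ} (i j : Fin n) :
    Measurable fun a : Conf n => ENNReal.ofReal (-log (pd a i j)) := by
  unfold pd; fun_prop

lemma lintegral_ball_ofReal_neg_log_pd_le {n : ℕ} {i j : Fin n} (hij : i ≠ j) (r : ℝ) :
    ∫⁻ a in ball (0 : Conf n) r, ENNReal.ofReal (-log (pd a i j)) ≤
      4 * volume (ball (0 : EuclideanSpace ℝ {q : Fin n × Fin 2 // ¬ q.1 = i}) r) := by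
  rw [← (PiLp.volume_preserving_toLp _).measure_preimage measurableSet_ball.nullMeasurableSet]
  refine (measurePreserving_insertPoint i).setLIntegral_le_mul_measure
    (measurable_ofReal_neg_log_pd i j) measurableSet_ball (fun w y h => ?_) (fun y _ => ?_)
  · rw [mem_ball_zero_iff] at h
    rw [mem_preimage, mem_ball_zero_iff]
    exact (norm_le_norm_insertPoint i w y).trans_lt h
  · have hji : ¬ j = i := Ne.symm hij
    simpa [pd, insertPoint_apply_of_ne i hji] using
      lintegral_ofReal_neg_log_sqrt_sum_le fun k => y ⟨(j, k), hji⟩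

lemma ofReal_mul_lintegral_ball_ofReal_neg_log_pd_le {n : ℕ} {i j : Fin n} (hij : i ≠ j)
    {r : ℝ} (hr : 0 ≤ r) :
    ENNReal.ofReal (π * r ^ 2 / n) * ∫⁻ a in ball (0 : Conf n) r, ENNReal.ofReal (-log (pd a i j)) ≤
      4 * volume (ball (0 : Conf n) r) := by
  have hcard := card_subtype_fst_ne i
  have : Nontrivial (EuclideanSpace ℝ {q : Fin n × Fin 2 // ¬ q.1 = i}) :=
    Module.nontrivial_of_finrank_pos (R := ℝ) (by rw [finrank_euclideanSpace, hcard]; omega)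
  have hn : ((n - 1 : ℕ) : ℝ) + 1 = n := by
    rw [Nat.cast_sub (by omega), Nat.cast_one, sub_add_cancel]
  rw [volume_ball_eq_ofReal_mul_volume_ball (k := n - 1) (by simp; omega)
      (by rw [finrank_euclideanSpace, hcard]) (0 : Conf n)
      (0 : EuclideanSpace ℝ {q : Fin n × Fin 2 // ¬ q.1 = i}) hr, hn, mul_left_comm]
  gcongr
  exact lintegral_ball_ofReal_neg_log_pd_le hij r

def posLogEnergy {n : ℕ} (a : Conf n) : ℝ≥0∞ :=
  ∑ i : Fin n, ∑ j : Fin n, if i ≠ j then ENNReal.ofReal (-log (pd a i j)) else 0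

lemma measurable_posLogEnergy_term {n : ℕ} (i j : Fin n) :
    Measurable fun a : Conf n => if i ≠ j then ENNReal.ofReal (-log (pd a i j)) else 0 :=
  Measurable.ite (MeasurableSet.const _) (measurable_ofReal_neg_log_pd i j) measurable_const

lemma measurable_posLogEnergy (n : ℕ) : Measurable (posLogEnergy (n := n)) :=
  Finset.measurable_sum _ fun i _ => Finset.measurable_sum _ fun j _ =>
    measurable_posLogEnergy_term i j

lemma ofReal_neg_sum_log_pd_le_posLogEnergy {n : ℕ} (a : Conf n) :
    ENNReal.ofReal (-(∑ i : Fin n, ∑ j : Fin n, if i ≠ j then log (pd a i j) else 0)) ≤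
      posLogEnergy a := by
  have hsub (f : Fin n → ℝ) : ENNReal.ofReal (∑ i, f i) ≤ ∑ i, ENNReal.ofReal (f i) :=
    Finset.le_sum_of_subadditive _ ENNReal.ofReal_zero.le (fun _ _ => ENNReal.ofReal_add_le) _ f
  simp only [← Finset.sum_neg_distrib, neg_ite, neg_zero]
  refine (hsub _).trans (Finset.sum_le_sum fun i _ => (hsub _).trans_eq ?_)
  simp only [apply_ite ENNReal.ofReal, ENNReal.ofReal_zero]

lemma ofReal_mul_lintegral_ball_posLogEnergy_le {n : ℕ} {r : ℝ} (hr : 0 ≤ r) :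
    ENNReal.ofReal (π * r ^ 2 / n) * ∫⁻ a in ball (0 : Conf n) r, posLogEnergy a ≤
      (n * (n - 1) : ℕ) * (4 * volume (ball (0 : Conf n) r)) := by
  calc ENNReal.ofReal (π * r ^ 2 / n) * ∫⁻ a in ball (0 : Conf n) r, posLogEnergy a
      = ∑ i : Fin n, ∑ j : Fin n, if i ≠ j then ENNReal.ofReal (π * r ^ 2 / n) *
          ∫⁻ a in ball (0 : Conf n) r, ENNReal.ofReal (-log (pd a i j)) else 0 := by
        simp only [posLogEnergy]
        rw [lintegral_finsetSum _ fun i _ => Finset.measurable_sum _ fun j _ =>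
          measurable_posLogEnergy_term i j, Finset.mul_sum]
        refine Finset.sum_congr rfl fun i _ => ?_
        rw [lintegral_finsetSum _ fun j _ => measurable_posLogEnergy_term i j, Finset.mul_sum]
        refine Finset.sum_congr rfl fun j _ => ?_
        split_ifs <;> simp
    _ ≤ ∑ i : Fin n, ∑ j : Fin n, if i ≠ j then 4 * volume (ball (0 : Conf n) r) else 0 := by
        gcongr with i _ j _
        split_ifs with hij
        · exact ofReal_mul_lintegral_ball_ofReal_neg_log_pd_le hij hr
        · rfl
    _ = (n * (n - 1) : ℕ) * (4 * volume (ball (0 : Conf n) r)) := by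
        simp only [← Finset.sum_filter, Finset.filter_ne, Finset.sum_const,
          Finset.card_erase_of_mem (Finset.mem_univ _), Finset.card_univ, Fintype.card_fin,
          nsmul_eq_mul, Nat.cast_mul, mul_assoc]

lemma ball_diff_Aset_subset (n : ℕ) (M R : ℝ) :
    ball (0 : Conf n) (R * √n) \ Aset n M R ⊆
      {a | ENNReal.ofReal (n * (n - 1) * M) ≤ posLogEnergy a} := by
  rintro a ⟨haB, haA⟩
  have hmoment : ∑ i : Fin n, ∑ k : Fin 2, a (i, k) ^ 2 ≤ n * R ^ 2 := by
    rw [mem_ball_zero_iff] at haB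
    have hsq : ‖a‖ ^ 2 < (R * √n) ^ 2 := pow_lt_pow_left₀ haB (norm_nonneg a) two_ne_zero
    simp only [EuclideanSpace.norm_sq_eq, Real.norm_eq_abs, sq_abs, mul_pow,
      sq_sqrt (Nat.cast_nonneg n), Fintype.sum_prod_type] at hsq
    linarith
  have henergy : n * (n - 1) * M <
      -(∑ i : Fin n, ∑ j : Fin n, if i ≠ j then log (pd a i j) else 0) :=
    lt_of_not_ge fun h => haA ⟨hmoment, h⟩
  exact (ENNReal.ofReal_le_ofReal henergy.le).trans (ofReal_neg_sum_log_pd_le_posLogEnergy a)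

lemma ofReal_mul_volume_ball_diff_Aset_le {n : ℕ} (hn : 2 ≤ n) (M : ℝ) {R : ℝ} (hR : 0 ≤ R) :
    ENNReal.ofReal (π * R ^ 2 * M) * volume (ball (0 : Conf n) (R * √n) \ Aset n M R) ≤
      4 * volume (ball (0 : Conf n) (R * √n)) := by
  set B := ball (0 : Conf n) (R * √n)
  have hn0 : (0 : ℝ) < n := by positivity
  have hpairs : ((n * (n - 1) : ℕ) : ℝ≥0∞) = ENNReal.ofReal (n * (n - 1)) := by
    rw [← ENNReal.ofReal_natCast, Nat.cast_mul, Nat.cast_sub (by omega), Nat.cast_one]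
  have hpairs_pos : (0 : ℝ) < n * (n - 1) := by
    have : (2 : ℝ) ≤ n := by exact_mod_cast hn
    nlinarith
  have hmarkov : ENNReal.ofReal (n * (n - 1) * M) * volume (B \ Aset n M R) ≤
      ∫⁻ a in B, posLogEnergy a := by
    refine le_trans ?_ (mul_meas_ge_le_lintegral (μ := volume.restrict B)
      (measurable_posLogEnergy n) (ENNReal.ofReal (n * (n - 1) * M)))
    rw [Measure.restrict_apply' measurableSet_ball]
    gcongr
    exact subset_inter (ball_diff_Aset_subset n M R) sdiff_subset
  have hradius : π * (R * √n) ^ 2 / n = π * R ^ 2 := by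
    rw [mul_pow, sq_sqrt hn0.le]
    field_simp
  refine (ENNReal.mul_le_mul_iff_right (ENNReal.ofReal_pos.2 hpairs_pos).ne'
    ENNReal.ofReal_ne_top).1 ?_
  calc ENNReal.ofReal (n * (n - 1)) * (ENNReal.ofReal (π * R ^ 2 * M) * volume (B \ Aset n M R))
      = ENNReal.ofReal (π * R ^ 2) *
          (ENNReal.ofReal (n * (n - 1) * M) * volume (B \ Aset n M R)) := by
        rw [ENNReal.ofReal_mul (p := π * R ^ 2) (by positivity),
          ENNReal.ofReal_mul (p := n * (n - 1)) hpairs_pos.le]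
        ring
    _ ≤ ENNReal.ofReal (π * (R * √n) ^ 2 / n) * ∫⁻ a in B, posLogEnergy a := by
        rw [hradius]
        gcongr
    _ ≤ (n * (n - 1) : ℕ) * (4 * volume B) :=
        ofReal_mul_lintegral_ball_posLogEnergy_le (by positivity)
    _ = ENNReal.ofReal (n * (n - 1)) * (4 * volume B) := by rw [hpairs]

/-- for `M` large (depending on `R`) and `n` large, `A(n,M,R)` fills at
least half of the ball `B^{2n}_{R√n}`. -/
theorem statement16 (R : ℝ) (hR : 0 < R) :
    ∃ M₀ : ℝ, 0 < M₀ ∧ ∀ M : ℝ, M₀ ≤ M → ∃ N : ℕ, ∀ n : ℕ, N ≤ n →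
      volume (Metric.ball (0 : Conf n) (R * Real.sqrt n)) ≤ 2 * volume (Aset n M R) := by
  refine ⟨8 / (π * R ^ 2), by positivity, fun M hM => ⟨2, fun n hn => ?_⟩⟩
  set B := ball (0 : Conf n) (R * √n)
  have h8 : 8 ≤ π * R ^ 2 * M := by rwa [div_le_iff₀ (by positivity), mul_comm] at hM
  have hbad : 2 * volume (B \ Aset n M R) ≤ volume B := by
    refine (ENNReal.mul_le_mul_iff_right (a := 4) (by norm_num) (by norm_num)).1 ?_
    calc 4 * (2 * volume (B \ Aset n M R)) = ENNReal.ofReal 8 * volume (B \ Aset n M R) := by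
          rw [← mul_assoc, ENNReal.ofReal_ofNat]; norm_num
      _ ≤ ENNReal.ofReal (π * R ^ 2 * M) * volume (B \ Aset n M R) := by gcongr
      _ ≤ 4 * volume B := ofReal_mul_volume_ball_diff_Aset_le hn M hR.le
  have hcover : volume B ≤ volume (Aset n M R) + volume (B \ Aset n M R) :=
    tsub_le_iff_left.1 le_measure_sdiff
  have hfin : volume B ≠ ∞ := measure_ball_lt_top.ne
  refine (ENNReal.add_le_add_iff_right hfin).1 ?_
  calc volume B + volume B = 2 * volume B := (two_mul _).symm
    _ ≤ 2 * volume (Aset n M R) + 2 * volume (B \ Aset n M R) := by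
        rw [← mul_add]; gcongr
    _ ≤ 2 * volume (Aset n M R) + volume B := by gcongr
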